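/- Let A ∈ ℂ^{m×n_a} have unit ℓ2-norm columns a_1,…,a_{n_a} with |⟨a_i, b_j⟩| ≤ μ_m for all i, j, and let B ∈ ℂ^{m×n_b} have unit ℓ2-norm columns b_1,…,b_{n_b} with coherence at most μ_b. Let X ⊆ {1,…,n_a} with |X| = n_x, E ⊆ {1,…,n_b} with |E| = n_e, set D_{X,E} = [A_X B_E], and suppose there exists λ > 0 with ‖D_{X,E} v‖₂ ≥ λ·‖v‖₂ for all v. If √(μ_m²·n_x + μ_b²·n_e) < λ, then for every γ ∉ E the column b_γ does not lie in the column space of D_{X,E}. -/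

import Mathlib

open scoped Matrix

/-- The Euclidean (ℓ2) norm of a complex vector. -/
noncomputable def e2norm {ι : Type*} [Fintype ι] (v : ι → ℂ) : ℝ :=
  Real.sqrt (∑ i, ‖v i‖ ^ 2)

/-- The submatrix of `M` consisting of the columns indexed by `S`. -/
def subCols {m n : ℕ} (M : Matrix (Fin m) (Fin n) ℂ) (S : Finset (Fin n)) :
    Matrix (Fin m) ↥S ℂ := M.submatrix id (fun j => (j : Fin n))

/-!
If `D v = b_γ` with `D = [A_X B_E]`, then
`1 = ⟨D v, b_γ⟩ = ⟨v, Dᴴ b_γ⟩ ≤ ‖v‖ ‖Dᴴ b_γ‖` while `λ ‖v‖ ≤ ‖D v‖ = 1`, so `λ ≤ ‖Dᴴ b_γ‖`.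
The entries of `Dᴴ b_γ` are the inner products `⟨a_x, b_γ⟩` (`x ∈ X`), bounded by `μm`, and
`⟨b_e, b_γ⟩` (`e ∈ E`, hence `e ≠ γ`), bounded by `μb`, so `‖Dᴴ b_γ‖ ≤ √(μm² n_x + μb² n_e)`.
-/

section e2norm

variable {ι κ : Type*} [Fintype ι] [Fintype κ]

lemma e2norm_eq_norm_toLp (v : ι → ℂ) : e2norm v = ‖(WithLp.toLp 2 v : EuclideanSpace ℂ ι)‖ := by
  rw [EuclideanSpace.norm_eq]
  rfl

lemma e2norm_nonneg (v : ι → ℂ) : 0 ≤ e2norm v := Real.sqrt_nonneg _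

lemma norm_star_dotProduct_le (v w : ι → ℂ) : ‖star v ⬝ᵥ w‖ ≤ e2norm v * e2norm w := by
  rw [e2norm_eq_norm_toLp, e2norm_eq_norm_toLp, dotProduct_comm,
    ← EuclideanSpace.inner_toLp_toLp]
  exact norm_inner_le_norm _ _

lemma star_dotProduct_self_eq (v : ι → ℂ) : star v ⬝ᵥ v = ((e2norm v ^ 2 : ℝ) : ℂ) := by
  rw [e2norm_eq_norm_toLp, dotProduct_comm, ← EuclideanSpace.inner_toLp_toLp,
    inner_self_eq_norm_sq_to_K]
  push_cast
  rfl

lemma e2norm_le_sqrt_sum_sq {v : ι → ℂ} {c : ι → ℝ} (h : ∀ i, ‖v i‖ ≤ c i) :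
    e2norm v ≤ √(∑ i, c i ^ 2) :=
  Real.sqrt_le_sqrt (Finset.sum_le_sum fun i _ => pow_le_pow_left₀ (norm_nonneg _) (h i) 2)

lemma e2norm_mulVec_sq_le (M : Matrix κ ι ℂ) (v : ι → ℂ) :
    e2norm (M *ᵥ v) ^ 2 ≤ e2norm v * e2norm (Mᴴ *ᵥ (M *ᵥ v)) := by
  have h : star v ⬝ᵥ (Mᴴ *ᵥ (M *ᵥ v)) = ((e2norm (M *ᵥ v) ^ 2 : ℝ) : ℂ) := by
    rw [← star_dotProduct_self_eq, Matrix.star_mulVec, Matrix.dotProduct_mulVec]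
  have h' := norm_star_dotProduct_le v (Mᴴ *ᵥ (M *ᵥ v))
  rwa [h, Complex.norm_real, Real.norm_of_nonneg (sq_nonneg _)] at h'

theorem le_e2norm_conjTranspose_mulVec_of_mulVec_eq {M : Matrix κ ι ℂ} {v : ι → ℂ}
    {b : κ → ℂ} {l : ℝ} (hb : e2norm b = 1) (hMv : M *ᵥ v = b)
    (hl : l * e2norm v ≤ e2norm (M *ᵥ v)) :
    l ≤ e2norm (Mᴴ *ᵥ b) := by
  have hcs := e2norm_mulVec_sq_le M v
  rw [hMv, hb] at hcs hl
  have hv : 0 < e2norm v := by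
    by_contra! hv
    nlinarith [e2norm_nonneg v, e2norm_nonneg (Mᴴ *ᵥ b)]
  nlinarith

end e2norm

lemma e2norm_conjTranspose_fromCols_mulVec_le {m na nb : ℕ} {A : Matrix (Fin m) (Fin na) ℂ}
    {B : Matrix (Fin m) (Fin nb) ℂ} {X : Finset (Fin na)} {E : Finset (Fin nb)}
    (w : Fin m → ℂ) {μa μb : ℝ}
    (hA : ∀ x ∈ X, ‖∑ k, (starRingEnd ℂ) (A k x) * w k‖ ≤ μa)
    (hB : ∀ e ∈ E, ‖∑ k, (starRingEnd ℂ) (B k e) * w k‖ ≤ μb) :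
    e2norm ((Matrix.fromCols (subCols A X) (subCols B E))ᴴ *ᵥ w) ≤
      √(μa ^ 2 * X.card + μb ^ 2 * E.card) := by
  have hentry : ∀ i, ‖((Matrix.fromCols (subCols A X) (subCols B E))ᴴ *ᵥ w) i‖ ≤
      Sum.elim (fun _ => μa) (fun _ => μb) i := by
    rintro (⟨x, hx⟩ | ⟨e, he⟩)
    · exact hA x hx
    · exact hB e he
  refine (e2norm_le_sqrt_sum_sq hentry).trans_eq ?_
  simp only [Fintype.sum_sum_type, Sum.elim_inl, Sum.elim_inr, Finset.sum_const,
    Finset.card_univ, Fintype.card_coe, nsmul_eq_mul]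
  ring_nf

theorem stmt11_general {m na nb : ℕ} (A : Matrix (Fin m) (Fin na) ℂ) (B : Matrix (Fin m) (Fin nb) ℂ)
    (μb μm : ℝ)
    (hunitB : ∀ j, ∑ i, ‖B i j‖ ^ 2 = 1)
    (hcohB : ∀ i j, i ≠ j → ‖∑ k, (starRingEnd ℂ) (B k i) * B k j‖ ≤ μb)
    (hmut : ∀ i j, ‖∑ k, (starRingEnd ℂ) (A k i) * B k j‖ ≤ μm)
    (X : Finset (Fin na)) (E : Finset (Fin nb)) (nx ne : ℕ)
    (hX : X.card = nx) (hE : E.card = ne)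
    (l : ℝ)
    (hD : ∀ v : ↥X ⊕ ↥E → ℂ,
      l * e2norm v ≤ e2norm ((Matrix.fromCols (subCols A X) (subCols B E)).mulVec v))
    (hlt : Real.sqrt (μm ^ 2 * nx + μb ^ 2 * ne) < l)
    (γ : Fin nb) (hγ : γ ∉ E) :
    ¬ ∃ v : ↥X ⊕ ↥E → ℂ,
        (Matrix.fromCols (subCols A X) (subCols B E)).mulVec v = (fun i => B i γ) := by
  rintro ⟨v, hv⟩
  have hb : e2norm (fun i => B i γ) = 1 := by rw [e2norm, hunitB, Real.sqrt_one]
  have hlow := le_e2norm_conjTranspose_mulVec_of_mulVec_eq hb hv (hD v)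
  have hup := e2norm_conjTranspose_fromCols_mulVec_le (A := A) (X := X) (E := E)
    (fun i => B i γ) (fun x _ => hmut x γ) (fun e he => hcohB e γ (by rintro rfl; exact hγ he))
  subst hX hE
  linarith

/-- under the coherence bounds and the lower singular-value bound
`‖D_{X,E} v‖₂ ≥ λ ‖v‖₂`, if `√(μm² n_x + μb² n_e) < λ`, then for every `γ ∉ E` the column
`b_γ` does not lie in the column space of `D_{X,E} = [A_X B_E]`. -/
theorem stmt11 {m na nb : ℕ} (A : Matrix (Fin m) (Fin na) ℂ) (B : Matrix (Fin m) (Fin nb) ℂ)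
    (μb μm : ℝ)
    (hunitA : ∀ j, ∑ i, ‖A i j‖ ^ 2 = 1)
    (hunitB : ∀ j, ∑ i, ‖B i j‖ ^ 2 = 1)
    (hcohB : ∀ i j, i ≠ j → ‖∑ k, (starRingEnd ℂ) (B k i) * B k j‖ ≤ μb)
    (hmut : ∀ i j, ‖∑ k, (starRingEnd ℂ) (A k i) * B k j‖ ≤ μm)
    (X : Finset (Fin na)) (E : Finset (Fin nb)) (nx ne : ℕ)
    (hX : X.card = nx) (hE : E.card = ne)
    (l : ℝ) (hl : 0 < l)
    (hD : ∀ v : ↥X ⊕ ↥E → ℂ,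
      l * e2norm v ≤ e2norm ((Matrix.fromCols (subCols A X) (subCols B E)).mulVec v))
    (hlt : Real.sqrt (μm ^ 2 * nx + μb ^ 2 * ne) < l)
    (γ : Fin nb) (hγ : γ ∉ E) :
    ¬ ∃ v : ↥X ⊕ ↥E → ℂ,
        (Matrix.fromCols (subCols A X) (subCols B E)).mulVec v = (fun i => B i γ) :=
  stmt11_general A B μb μm hunitB hcohB hmut X E nx ne hX hE l hD hlt γ hγ
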